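/- For 2 ≤ k ≤ n−1 and n−k ≤ h ≤ n−2, the h-super edge-connectivity of the (n,k)-star graph satisfies λ_s^{(h)}(S_{n,k}) ≤ (h+1)!(n−h−1)/(n−k)!. -/

import Mathlib

open SimpleGraph

/-- `q` is a swap-neighbor of `p` in the (n,k)-star graph: it is obtained from `p`
by swapping the first digit with the `i`-th digit for some `i ≠ 0`. -/
def swapAdj {n k : ℕ} [NeZero k] (p q : Fin k ↪ Fin n) : Prop :=
  ∃ i : Fin k, i ≠ 0 ∧ q 0 = p i ∧ q i = p 0 ∧
    ∀ j : Fin k, j ≠ 0 → j ≠ i → q j = p j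

/-- `q` is an unswap-neighbor of `p`: obtained by replacing the first digit of `p`
by a symbol not occurring in `p`. -/
def unswapAdj {n k : ℕ} [NeZero k] (p q : Fin k ↪ Fin n) : Prop :=
  (∀ j : Fin k, j ≠ 0 → q j = p j) ∧ ∀ j : Fin k, q 0 ≠ p j

/-- The (n,k)-star graph `S_{n,k}` on the k-arrangements of an n-set. -/
def nkStar (n k : ℕ) [NeZero k] : SimpleGraph (Fin k ↪ Fin n) :=
  SimpleGraph.fromRel (fun p q => swapAdj p q ∨ unswapAdj p q)

/-- The n-dimensional star graph `S_n` on permutations, adjacency by swapping the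
first digit with the `i`-th digit, `i ≠ 0`. -/
def starGraph (n : ℕ) [NeZero n] : SimpleGraph (Equiv.Perm (Fin n)) :=
  SimpleGraph.fromRel (fun p q => ∃ i : Fin n, i ≠ 0 ∧ q = p * Equiv.swap 0 i)

/-- `T` is an h-vertex-cut: `G - T` is disconnected and has minimum degree at least `h`. -/
def IsHVertexCut {V : Type*} (G : SimpleGraph V) (h : ℕ) (T : Set V) : Prop :=
  ¬ (G.induce Tᶜ).Connected ∧ ∀ v, v ∉ T → h ≤ (G.neighborSet v \ T).ncard

/-- The h-super connectivity `κ_s^{(h)}(G)`. -/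
noncomputable def kappaS {V : Type*} (G : SimpleGraph V) (h : ℕ) : ℕ :=
  sInf {m | ∃ T : Set V, IsHVertexCut G h T ∧ T.ncard = m}

/-- `F` is an h-edge-cut: `G - F` is disconnected and has minimum degree at least `h`. -/
def IsHEdgeCut {V : Type*} (G : SimpleGraph V) (h : ℕ) (F : Set (Sym2 V)) : Prop :=
  F ⊆ G.edgeSet ∧ ¬ (G.deleteEdges F).Connected ∧
    ∀ v : V, h ≤ ((G.deleteEdges F).neighborSet v).ncard

/-- The h-super edge-connectivity `λ_s^{(h)}(G)`. -/
noncomputable def lambdaS {V : Type*} (G : SimpleGraph V) (h : ℕ) : ℕ :=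
  sInf {m | ∃ F : Set (Sym2 V), IsHEdgeCut G h F ∧ F.ncard = m}

/-- `G'` together with the projection `π` is a `t`-split graph of `G`: fibers of `π`
have size `t` and are independent, `π` is a graph homomorphism, and over each edge of
`G` the edges of `G'` form a perfect matching between the two fibers. -/
structure IsSplitGraph {V W : Type*} (G : SimpleGraph V) (t : ℕ)
    (G' : SimpleGraph W) (π : W → V) : Prop where
  fiber_card : ∀ v : V, Nat.card (π ⁻¹' {v}) = t
  indep : ∀ x y : W, π x = π y → ¬ G'.Adj x y
  adj_map : ∀ x y : W, G'.Adj x y → G.Adj (π x) (π y)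
  matching : ∀ (x : W) (v : V), G.Adj (π x) v → ∃! z : W, π z = v ∧ G'.Adj x z

/-- The prefix map sending a permutation of `{1,...,n}` to its length-`k` prefix. -/
def prefixMap (n k : ℕ) (hkn : k ≤ n) (p : Equiv.Perm (Fin n)) : Fin k ↪ Fin n :=
  (Fin.castLEEmb hkn).trans p.toEmbedding

/-- The set `X` of k-arrangements whose last `n-1-h` digits are `1,2,...,n-1-h` in order. -/
def lastFixed (n k h : ℕ) : Set (Fin k ↪ Fin n) :=
  {u | ∀ i : Fin k, k - (n - 1 - h) ≤ i.val → (u i).val = i.val - (k - (n - 1 - h))}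

/-!
Let `X` be the set of arrangements whose last `m = n - 1 - h` positions carry `0, …, m - 1` in
order, and cut all edges between `X` and its complement. Every neighbour of `v` is
`v.setValue 0 b` for a symbol `b ≠ v 0`: it changes position `0` and at most the position where
`b` sat. So a vertex of `X` keeps exactly the neighbours with `b` outside its `m` last-block
symbols, i.e. `n - 1 - m = h` of them, and loses at most `m` edges; a vertex `v` outside `X`
has a last-block position `i` with the wrong symbol and keeps every neighbour with `b ≠ v i`,
at least `n - 2 ≥ h` of them. The first `k - m` symbols of a vertex of `X` are distinct
elements of `{m, …, n - 1}`, so `|X| ≤ (h + 1)! / (n - k)!` and the cut has at most `|X| · m` edges.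
-/

open Finset

namespace SimpleGraph

variable {V : Type*}

def edgeBoundary (G : SimpleGraph V) (S : Set V) : Set (Sym2 V) :=
  {e | e ∈ G.edgeSet ∧ ∃ a ∈ S, ∃ b ∉ S, e = s(a, b)}

variable {G : SimpleGraph V} {S : Set V}

lemma edgeBoundary_subset_edgeSet : G.edgeBoundary S ⊆ G.edgeSet := fun _ he => he.1

lemma deleteEdges_edgeBoundary_adj {v w : V} :
    (G.deleteEdges (G.edgeBoundary S)).Adj v w ↔ G.Adj v w ∧ (v ∈ S ↔ w ∈ S) := by
  simp only [deleteEdges_adj, edgeBoundary, Set.mem_ofPred_eq, mem_edgeSet, Sym2.eq_iff]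
  grind

lemma not_connected_deleteEdges_edgeBoundary {a b : V} (ha : a ∈ S) (hb : b ∉ S) :
    ¬ (G.deleteEdges (G.edgeBoundary S)).Connected := by
  intro hconn
  obtain ⟨p⟩ := hconn.preconnected a b
  obtain ⟨d, -, hd₁, hd₂⟩ := p.exists_boundary_dart S ha hb
  exact hd₂ ((deleteEdges_edgeBoundary_adj.1 d.adj).2.1 hd₁)

lemma ncard_edgeBoundary_le [Finite V] {d : ℕ}
    (hd : ∀ a ∈ S, {b | G.Adj a b ∧ b ∉ S}.ncard ≤ d) :
    (G.edgeBoundary S).ncard ≤ S.ncard * d := by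
  classical
  have hsub : G.edgeBoundary S ⊆
      ⋃ a ∈ S.toFinite.toFinset, (fun b => s(a, b)) '' {b | G.Adj a b ∧ b ∉ S} := by
    rintro _ ⟨he, a, ha, b, hb, rfl⟩
    exact Set.mem_iUnion₂.2 ⟨a, S.toFinite.mem_toFinset.2 ha, b, ⟨he, hb⟩, rfl⟩
  calc (G.edgeBoundary S).ncard
      ≤ (⋃ a ∈ S.toFinite.toFinset, (fun b => s(a, b)) '' {b | G.Adj a b ∧ b ∉ S}).ncard :=
        Set.ncard_le_ncard hsub
    _ ≤ ∑ a ∈ S.toFinite.toFinset, ((fun b => s(a, b)) '' {b | G.Adj a b ∧ b ∉ S}).ncard :=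
        set_ncard_biUnion_le _ _
    _ ≤ ∑ _a ∈ S.toFinite.toFinset, d :=
        sum_le_sum fun a ha =>
          (Set.ncard_image_le (Set.toFinite _)).trans (hd a (S.toFinite.mem_toFinset.1 ha))
    _ = S.ncard * d := by rw [sum_const, smul_eq_mul, Set.ncard_eq_toFinset_card]

end SimpleGraph

section

variable {n k h : ℕ}

def lastBlock (n k h : ℕ) : Finset (Fin k) := {i | k - (n - 1 - h) ≤ i.val}

lemma mem_lastBlock {i : Fin k} : i ∈ lastBlock n k h ↔ k - (n - 1 - h) ≤ i.val := by
  simp [lastBlock]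

lemma card_lastBlock_le : #(lastBlock n k h) ≤ n - 1 - h := by
  calc #(lastBlock n k h) ≤ #(range (n - 1 - h)) := by
        refine card_le_card_of_injOn (fun i => i.val - (k - (n - 1 - h))) (fun i hi => ?_) ?_
        · simp only [coe_range, Set.mem_Iio]
          have := mem_lastBlock.1 hi
          omega
        · intro i hi j hj hij
          have := mem_lastBlock.1 hi
          have := mem_lastBlock.1 hj
          exact Fin.ext (by simp only at hij; omega)
    _ = n - 1 - h := card_range _

lemma mem_lastFixed_congr {u v : Fin k ↪ Fin n} (huv : ∀ i ∈ lastBlock n k h, u i = v i) :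
    u ∈ lastFixed n k h ↔ v ∈ lastFixed n k h :=
  forall_congr' fun i => forall_congr' fun hi => by rw [huv i (mem_lastBlock.2 hi)]

lemma le_lastFixed_apply {v : Fin k ↪ Fin n} (hv : v ∈ lastFixed n k h) {j : Fin k}
    (hj : j.val < k - (n - 1 - h)) : n - 1 - h ≤ (v j).val := by
  by_contra! hlt
  let i : Fin k := ⟨(v j).val + (k - (n - 1 - h)), by omega⟩
  have hvi : v i = v j := Fin.ext (by rw [hv i (Nat.le_add_left _ _)]; simp [i])
  have := congrArg Fin.val (v.injective hvi)
  simp only [i] at this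
  omega

lemma ncard_lastFixed_le (hh : h < n) :
    (lastFixed n k h).ncard ≤ (h + 1).descFactorial (k - (n - 1 - h)) := by
  set T := k - (n - 1 - h)
  let c : Fin n := ⟨n - 1 - h, by omega⟩
  let restrict : lastFixed n k h → (Fin T ↪ Set.Ici c) := fun v =>
    ((Fin.castLEEmb (Nat.sub_le k _)).trans v.1).codRestrict _ fun j =>
      le_lastFixed_apply v.2 j.2
  have hinj : Function.Injective restrict := by
    intro v w hvw
    refine Subtype.ext (Function.Embedding.ext fun i => ?_)
    by_cases hi : i.val < T
    · exact congrArg Subtype.val (DFunLike.congr_fun hvw ⟨i.val, hi⟩)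
    · exact Fin.ext ((v.2 i (by omega)).trans (w.2 i (by omega)).symm)
  calc (lastFixed n k h).ncard = Nat.card (lastFixed n k h) := (Nat.card_coe_set_eq _).symm
    _ ≤ Nat.card (Fin T ↪ Set.Ici c) := Nat.card_le_card_of_injective restrict hinj
    _ = (h + 1).descFactorial T := by
        rw [Nat.card_eq_fintype_card, Fintype.card_embedding_eq, Fintype.card_Ici, Fin.card_Ici]
        simp only [Fintype.card_fin, c]
        congr 1
        omega

variable [NeZero k]

lemma nkStar_adj_setValue {v : Fin k ↪ Fin n} {b : Fin n} (hb : b ≠ v 0) :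
    (nkStar n k).Adj v (v.setValue 0 b) := by
  have hne : v ≠ v.setValue 0 b := fun h => hb (by rw [h, Function.Embedding.setValue_eq])
  refine (fromRel_adj _ _ _).2 ⟨hne, Or.inl ?_⟩
  by_cases hbv : b ∈ Set.range v
  · obtain ⟨i, rfl⟩ := hbv
    have hi : i ≠ 0 := by rintro rfl; exact hb rfl
    refine Or.inl ⟨i, hi, Function.Embedding.setValue_eq .., ?_, fun j hj hji => ?_⟩
    · exact Function.Embedding.setValue_right_apply_eq ..
    · exact Function.Embedding.setValue_eq_of_ne hj (v.injective.ne hji)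
  · refine Or.inr ⟨fun j hj => Function.Embedding.setValue_eq_of_ne hj ?_, fun j => ?_⟩
    · exact fun h => hbv ⟨j, h⟩
    · rw [Function.Embedding.setValue_eq]; exact fun h => hbv ⟨j, h.symm⟩

lemma eq_setValue_of_nkStar_adj {p q : Fin k ↪ Fin n} (hpq : (nkStar n k).Adj p q) :
    q = p.setValue 0 (q 0) := by
  obtain ⟨-, (⟨i, hi, h0, hi', hj⟩ | ⟨hj, h0⟩) | (⟨i, hi, h0, hi', hj⟩ | ⟨hj, h0⟩)⟩ :=
    (fromRel_adj _ _ _).1 hpq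
  all_goals
    ext j
    simp only [Function.Embedding.setValue, Function.Embedding.coeFn_mk]
    split_ifs <;> grind [q.injective.eq_iff, p.injective.eq_iff]

lemma sub_card_le_ncard_nkStar_adj_agree (v : Fin k ↪ Fin n) {J : Finset (Fin k)} (hJ : 0 ∈ J) :
    n - #J ≤ {u | (nkStar n k).Adj v u ∧ ∀ j ∈ J, j ≠ 0 → u j = v j}.ncard := by
  classical
  have hinj : Function.Injective fun b => v.setValue 0 b := fun b c hbc => by
    simpa using DFunLike.congr_fun hbc 0
  calc n - #J = #(J.image v)ᶜ := by
        rw [card_compl, card_image_of_injective _ v.injective, Fintype.card_fin]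
    _ = ((((J.image v)ᶜ.image fun b => v.setValue 0 b : Finset (Fin k ↪ Fin n))) :
          Set (Fin k ↪ Fin n)).ncard := by
        rw [Set.ncard_coe_finset, card_image_of_injective _ hinj]
    _ ≤ _ := by
        refine Set.ncard_le_ncard fun u hu => ?_
        obtain ⟨b, hb, rfl⟩ := mem_image.1 (mem_coe.1 hu)
        have hbJ : ∀ j ∈ J, v j ≠ b := fun j hj hjb =>
          mem_compl.1 hb (hjb ▸ mem_image_of_mem v hj)
        exact ⟨nkStar_adj_setValue (hbJ 0 hJ).symm,
          fun j hj hj0 => Function.Embedding.setValue_eq_of_ne hj0 (hbJ j hj)⟩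

lemma zero_notMem_lastBlock (hT : n - 1 - h < k) : (0 : Fin k) ∉ lastBlock n k h := by
  rw [mem_lastBlock, Fin.val_zero]
  omega

lemma setValue_notMem_lastFixed {v : Fin k ↪ Fin n} (hv : v ∈ lastFixed n k h) {i : Fin k}
    (hi : i ∈ lastBlock n k h) (hi0 : i ≠ 0) : v.setValue 0 (v i) ∉ lastFixed n k h := by
  intro hw
  have hwi := hw i (mem_lastBlock.1 hi)
  rw [Function.Embedding.setValue_right_apply_eq, ← hv i (mem_lastBlock.1 hi)] at hwi
  exact hi0 (v.injective (Fin.ext hwi)).symm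

-- The rotation `i ↦ i + (n - 1 - h)` of positions sends the last block onto `0, …, n - 2 - h`.
lemma exists_mem_lastFixed (hkn : k ≤ n) (hT : n - 1 - h < k) : ∃ v, v ∈ lastFixed n k h := by
  let c : Fin k := ⟨n - 1 - h, hT⟩
  refine ⟨(Equiv.addRight c).toEmbedding.trans (Fin.castLEEmb hkn), fun i hi => ?_⟩
  simp only [Function.Embedding.trans_apply, Equiv.coe_toEmbedding, Equiv.coe_addRight,
    Fin.castLEEmb_apply, Fin.val_castLE, Fin.val_add_eq_ite, c]
  split_ifs <;> omega

lemma ncard_nkStar_adj_notMem_lastFixed_le (hT : n - 1 - h < k) {a : Fin k ↪ Fin n}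
    (ha : a ∈ lastFixed n k h) :
    {b | (nkStar n k).Adj a b ∧ b ∉ lastFixed n k h}.ncard ≤ n - 1 - h := by
  classical
  calc {b | (nkStar n k).Adj a b ∧ b ∉ lastFixed n k h}.ncard
      ≤ ((((lastBlock n k h).image a).image fun b => a.setValue 0 b : Finset (Fin k ↪ Fin n)) :
          Set (Fin k ↪ Fin n)).ncard := by
        refine Set.ncard_le_ncard fun b ⟨hab, hb⟩ => ?_
        rw [eq_setValue_of_nkStar_adj hab] at hb ⊢
        refine mem_coe.2 (mem_image_of_mem _ ?_)
        by_contra hb0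
        refine hb ((mem_lastFixed_congr fun i hi => ?_).2 ha)
        exact Function.Embedding.setValue_eq_of_ne
          (ne_of_mem_of_not_mem hi (zero_notMem_lastBlock hT))
          fun hai => hb0 (hai ▸ mem_image_of_mem a hi)
    _ ≤ #(lastBlock n k h) := by
        rw [Set.ncard_coe_finset]
        exact card_image_le.trans card_image_le
    _ ≤ n - 1 - h := card_lastBlock_le

lemma le_ncard_neighborSet_deleteEdges_edgeBoundary_lastFixed (hT : n - 1 - h < k)
    (hh : h ≤ n - 2) (v : Fin k ↪ Fin n) :
    h ≤ (((nkStar n k).deleteEdges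
      ((nkStar n k).edgeBoundary (lastFixed n k h))).neighborSet v).ncard := by
  classical
  obtain ⟨J, hJ0, hJcard, hJ⟩ : ∃ J : Finset (Fin k), 0 ∈ J ∧ h ≤ n - #J ∧
      ∀ u : Fin k ↪ Fin n, (∀ j ∈ J, j ≠ 0 → u j = v j) →
        (u ∈ lastFixed n k h ↔ v ∈ lastFixed n k h) := by
    by_cases hv : v ∈ lastFixed n k h
    · refine ⟨insert 0 (lastBlock n k h), mem_insert_self _ _, ?_, fun u hu =>
        mem_lastFixed_congr fun i hi => hu i (mem_insert_of_mem hi)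
          (ne_of_mem_of_not_mem hi (zero_notMem_lastBlock hT))⟩
      have := (card_insert_le 0 (lastBlock n k h)).trans
        (Nat.add_le_add_right card_lastBlock_le 1)
      omega
    · obtain ⟨i, hi, hvi⟩ : ∃ i : Fin k, k - (n - 1 - h) ≤ i.val ∧
          (v i).val ≠ i.val - (k - (n - 1 - h)) := by
        simpa [lastFixed] using hv
      have hi0 : i ≠ 0 := ne_of_mem_of_not_mem (mem_lastBlock.2 hi) (zero_notMem_lastBlock hT)
      refine ⟨{0, i}, mem_insert_self _ _, ?_, fun u hu => iff_of_false (fun hu' => ?_) hv⟩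
      · have := card_le_two (a := (0 : Fin k)) (b := i)
        omega
      · exact hvi (hu i (by simp) hi0 ▸ hu' i hi)
  calc h ≤ n - #J := hJcard
    _ ≤ {u | (nkStar n k).Adj v u ∧ ∀ j ∈ J, j ≠ 0 → u j = v j}.ncard :=
        sub_card_le_ncard_nkStar_adj_agree v hJ0
    _ ≤ _ := Set.ncard_le_ncard fun u ⟨hadj, hu⟩ =>
        deleteEdges_edgeBoundary_adj.2 ⟨hadj, (hJ u hu).symm⟩

lemma isHEdgeCut_edgeBoundary_lastFixed (hk2 : 2 ≤ k) (hkn : k ≤ n) (hT : n - 1 - h < k)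
    (hh : h ≤ n - 2) :
    IsHEdgeCut (nkStar n k) h ((nkStar n k).edgeBoundary (lastFixed n k h)) := by
  obtain ⟨v, hv⟩ := exists_mem_lastFixed hkn hT
  let i : Fin k := ⟨k - 1, by omega⟩
  have hi : i ∈ lastBlock n k h := mem_lastBlock.2 (by simp only [i]; omega)
  have hi0 : i ≠ 0 := fun h0 => by
    have := congrArg Fin.val h0
    simp only [i, Fin.val_zero] at this
    omega
  exact ⟨edgeBoundary_subset_edgeSet,
    not_connected_deleteEdges_edgeBoundary hv (setValue_notMem_lastFixed hv hi hi0),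
    le_ncard_neighborSet_deleteEdges_edgeBoundary_lastFixed hT hh⟩

end

/-- λ_s^{(h)}(S_{n,k}) ≤ (h+1)!(n-h-1)/(n-k)! for
2 ≤ k ≤ n-1 and n-k ≤ h ≤ n-2. -/
theorem lambda_upper (n k h : ℕ) (hk2 : 2 ≤ k) (hk : k ≤ n - 1)
    (h1 : n - k ≤ h) (h2 : h ≤ n - 2) :
    lambdaS (@nkStar n k ⟨by omega⟩) h
      ≤ (h + 1).factorial * (n - h - 1) / (n - k).factorial := by
  have : NeZero k := ⟨by omega⟩
  have hT : n - 1 - h < k := by omega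
  have hTh : k - (n - 1 - h) ≤ h + 1 := by omega
  calc lambdaS (nkStar n k) h
      ≤ ((nkStar n k).edgeBoundary (lastFixed n k h)).ncard :=
        Nat.sInf_le ⟨_, isHEdgeCut_edgeBoundary_lastFixed hk2 (by omega) hT h2, rfl⟩
    _ ≤ (lastFixed n k h).ncard * (n - 1 - h) :=
        ncard_edgeBoundary_le fun _ ha => ncard_nkStar_adj_notMem_lastFixed_le hT ha
    _ ≤ (h + 1).descFactorial (k - (n - 1 - h)) * (n - 1 - h) :=
        Nat.mul_le_mul_right _ (ncard_lastFixed_le (by omega))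
    _ = (h + 1).factorial * (n - h - 1) / (n - k).factorial := by
        rw [Nat.descFactorial_eq_div hTh, Nat.div_mul_right_comm (Nat.factorial_dvd_factorial
          (Nat.sub_le _ _)), show h + 1 - (k - (n - 1 - h)) = n - k by omega,
          show n - 1 - h = n - h - 1 by omega]
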